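/- arXiv:0903.1337 — 2 statements merged into one kernel-verified Lean document; each statement's English description precedes it below -/
import Mathlib

section
/- Suppose sequences (a(t))_{t≥0} and (b(t))_{t≥0} of nonnegative reals satisfy a(t+1) ≤ ρ·a(t) + c·b(t) and b(t) ≤ (ε/m)·l₀·k^{t-1} whenever a(s) ≤ l₀·k^s for all s ≤ t, with a(0) ≤ l₀ and a(1) ≤ k·l₀, where 0 < ρ < k < 1, c ≥ 0, and ρ·k + c·ε/m < k². Then a(t) ≤ l₀·k^t for all t ≥ 0. -/
theorem strong_induction_bound (l₀ ρ k c ε m : ℝ)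
    (hl₀ : 0 < l₀) (hρ0 : 0 < ρ) (hρk : ρ < k) (hk1 : k < 1)
    (hc : 0 ≤ c) (hε : 0 < ε) (hm : 0 < m)
    (hcond : ρ * k + c * ε / m < k ^ 2)
    (a b : ℕ → ℝ) (ha : ∀ t, 0 ≤ a t) (hb : ∀ t, 0 ≤ b t)
    (ha0 : a 0 ≤ l₀) (ha1 : a 1 ≤ k * l₀)
    (hrec : ∀ t, (∀ s, s ≤ t → a s ≤ l₀ * k ^ s) →
      a (t + 1) ≤ ρ * a t + c * b t ∧ b t ≤ ε / m * l₀ * k ^ (t - 1)) :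
    ∀ t, a t ≤ l₀ * k ^ t := by
  have hk0 : 0 < k := lt_trans hρ0 hρk
  intro t
  induction t using Nat.strong_induction_on with
  | _ t ih =>
    match t with
    | 0 => simpa using ha0
    | 1 => simpa [mul_comm] using ha1
    | (n + 2) =>
      have hall : ∀ s, s ≤ n + 1 → a s ≤ l₀ * k ^ s := fun s hs =>
        ih s (Nat.lt_succ_of_le hs)
      obtain ⟨h1, h2⟩ := hrec (n + 1) hall
      have han : a (n + 1) ≤ l₀ * k ^ (n + 1) := hall (n + 1) le_rfl
      have hbn : b (n + 1) ≤ ε / m * l₀ * k ^ n := by simpa using h2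
      have : a (n + 2) ≤ ρ * (l₀ * k ^ (n + 1)) + c * (ε / m * l₀ * k ^ n) := by
        refine le_trans h1 (add_le_add ?_ ?_)
        · exact mul_le_mul_of_nonneg_left han hρ0.le
        · exact mul_le_mul_of_nonneg_left hbn hc
      refine le_trans this ?_
      have hrw : ρ * (l₀ * k ^ (n + 1)) + c * (ε / m * l₀ * k ^ n)
          = (ρ * k + c * ε / m) * (l₀ * k ^ n) := by ring
      have hgoal : l₀ * k ^ (n + 2) = k ^ 2 * (l₀ * k ^ n) := by ring
      rw [hrw, hgoal]
      exact mul_le_mul_of_nonneg_right hcond.le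
        (mul_nonneg hl₀.le (pow_nonneg hk0.le n))
end

section
/- Main convergence theorem: Consider x(t+1) = x(t) + K·x̂(t) on ℝ^N with the zooming-in/zooming-out coding: x̂_j(0)=0, x̂_j(t+1) = x̂_j(t) + l_j(t+1)·q^(m)((x_j(t+1) - x̂_j(t))/l_j(t+1)), l_j(0)=l_j(1)=l₀, l_j(t+1) = k_in·l_j(t) if |x_j(t+1)-x̂_j(t)| < l_j(t+1), else k_out·l_j(t). Assume I+K is doubly stochastic with essential spectral radius ρ, 1ᵀK=0, ker K = span(1), ρ < k_in < 1, m ≥ (4+3k_in)·√N/(k_in·(k_in-ρ)), and l₀ > 2(ρ+2)‖x(0)‖/(k_in - 3√N/m). Then x(t) → x_ave(0)·1 and x̂(t) → x_ave(0)·1 as t → ∞, exponentially with rate at most k_in. -/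
/-!
Write `y = x - x_ave(0) 𝟙` for the disagreement and `e = x - x̂` for the coding error. Since
`P = I + K` is doubly stochastic, it preserves sums and fixes constants, so the average is
invariant and `K x̂ = K y - K e`; with `‖P‖ ≤ 1` (Birkhoff) and hence `‖K‖ ≤ 2` this gives
`‖y(t+1)‖ ≤ ρ ‖y(t)‖ + 2 ‖e(t)‖` and `‖x(t+1) - x̂(t)‖ ≤ (1 + ρ) ‖y(t)‖ + 3 ‖e(t)‖`.
While each quantizer input stays within its range `l`, the coding error is at most `√N l / m`.
The bounds on `m` and `l₀` yield a gain `α` for which `l(t+1) = l₀ k_in^t` and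
`‖y(t+1)‖ ≤ α l₀ k_in^t` propagate: every quantizer input then lies strictly below `k_in l`,
so the coder never zooms out and all errors shrink by the factor `k_in` at each step.
-/

/-- Euclidean norm on `Fin N → ℝ`. -/
noncomputable def enorm' {N : ℕ} (v : Fin N → ℝ) : ℝ :=
  Real.sqrt (∑ i, (v i) ^ 2)

/-- The uniform quantizer `q^(m)` with `m` quantization levels on `[-1,1]`. -/
noncomputable def quant (m : ℕ) (x : ℝ) : ℝ :=
  if 1 < x then 1
  else if x < -1 then -1
  else -1 + (2 * (max (1:ℝ) (min (m:ℝ) ((⌈(m:ℝ) * (x + 1) / 2⌉ : ℤ) : ℝ))) - 1) / m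

open Matrix Finset
open scoped Matrix.Norms.L2Operator

section EuclideanNorm

variable {N : ℕ}

lemma enorm'_eq_norm (v : Fin N → ℝ) : enorm' v = ‖WithLp.toLp 2 v‖ := by
  simp [enorm', EuclideanSpace.norm_eq]

lemma enorm'_nonneg (v : Fin N → ℝ) : 0 ≤ enorm' v := Real.sqrt_nonneg _

lemma enorm'_add_le (v w : Fin N → ℝ) : enorm' (v + w) ≤ enorm' v + enorm' w := by
  simpa only [enorm'_eq_norm, WithLp.toLp_add] using norm_add_le _ _

lemma enorm'_sub_le (v w : Fin N → ℝ) : enorm' (v - w) ≤ enorm' v + enorm' w := by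
  simpa only [enorm'_eq_norm, WithLp.toLp_sub] using norm_sub_le _ _

lemma abs_le_enorm' (v : Fin N → ℝ) (j : Fin N) : |v j| ≤ enorm' v := by
  rw [← Real.sqrt_sq_eq_abs]
  exact Real.sqrt_le_sqrt (single_le_sum (fun i _ => sq_nonneg (v i)) (mem_univ j))

lemma enorm'_le_of_forall_abs_le {v : Fin N → ℝ} {c : ℝ} (hc : 0 ≤ c) (h : ∀ i, |v i| ≤ c) :
    enorm' v ≤ Real.sqrt N * c := by
  calc enorm' v ≤ Real.sqrt (∑ _i : Fin N, c ^ 2) :=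
        Real.sqrt_le_sqrt (sum_le_sum fun i _ => sq_le_sq' (abs_le.1 (h i)).1 (abs_le.1 (h i)).2)
    _ = Real.sqrt N * c := by simp [Real.sqrt_mul (Nat.cast_nonneg N), Real.sqrt_sq hc]

lemma enorm'_sub_mean_le (v : Fin N → ℝ) :
    enorm' (v - fun _ => (N : ℝ)⁻¹ * ∑ i, v i) ≤ enorm' v := by
  refine Real.sqrt_le_sqrt ?_
  rcases N.eq_zero_or_pos with rfl | hN
  · simp
  set a := (N : ℝ)⁻¹ * ∑ i, v i
  have hsum : ∑ i, v i = N * a := by simp only [a]; field_simp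
  have hexp : ∑ i, (v i - a) ^ 2 = ∑ i, v i ^ 2 - N * a ^ 2 := by
    simp only [sub_sq, sum_add_distrib, sum_sub_distrib, ← sum_mul, ← mul_sum, hsum, sum_const,
      card_univ, Fintype.card_fin, nsmul_eq_mul]
    ring
  simp only [Pi.sub_apply, hexp]
  exact sub_le_self _ (by positivity)

lemma enorm'_mulVec_le (A : Matrix (Fin N) (Fin N) ℝ) (v : Fin N → ℝ) :
    enorm' (A *ᵥ v) ≤ ‖A‖ * enorm' v := by
  rw [enorm'_eq_norm, enorm'_eq_norm]
  exact A.l2_opNorm_mulVec (WithLp.toLp 2 v)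

end EuclideanNorm

section Consensus

variable {N : ℕ} {K : Matrix (Fin N) (Fin N) ℝ}

lemma l2_opNorm_le_two (hP : 1 + K ∈ doublyStochastic ℝ (Fin N)) : ‖K‖ ≤ 2 := by
  calc ‖K‖ = ‖(1 + K) - 1‖ := by rw [add_sub_cancel_left]
    _ ≤ ‖1 + K‖ + ‖(1 : Matrix (Fin N) (Fin N) ℝ)‖ := norm_sub_le _ _
    _ ≤ 1 + 1 := add_le_add (l2_opNorm_le_one_of_mem_doublyStochastic hP)
        (l2_opNorm_le_one_of_mem_doublyStochastic (one_mem _))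
    _ = 2 := by norm_num

lemma enorm'_mulVec_le_two (hP : 1 + K ∈ doublyStochastic ℝ (Fin N)) (v : Fin N → ℝ) :
    enorm' (K *ᵥ v) ≤ 2 * enorm' v :=
  (enorm'_mulVec_le K v).trans (mul_le_mul_of_nonneg_right (l2_opNorm_le_two hP) (enorm'_nonneg v))

lemma sum_mulVec_eq_zero (hP : 1 + K ∈ doublyStochastic ℝ (Fin N)) (v : Fin N → ℝ) :
    ∑ i, (K *ᵥ v) i = 0 := by
  simpa [add_mulVec, sum_add_distrib] using sum_mulVec_of_mem_doublyStochastic (x := v) hP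

lemma mulVec_const_eq_zero (hP : 1 + K ∈ doublyStochastic ℝ (Fin N)) (c : ℝ) :
    K *ᵥ (fun _ => c) = 0 := by
  have hK1 : K *ᵥ 1 = 0 := by simpa [add_mulVec] using mulVec_one_of_mem_doublyStochastic hP
  rw [show (fun _ => c) = c • (1 : Fin N → ℝ) by ext; simp, mulVec_smul, hK1, smul_zero]

lemma mulVec_eq_mulVec_sub_mulVec (hP : 1 + K ∈ doublyStochastic ℝ (Fin N)) (x xh : Fin N → ℝ)
    (a : ℝ) : K *ᵥ xh = K *ᵥ (x - fun _ => a) - K *ᵥ (x - xh) := by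
  rw [mulVec_sub, mulVec_sub, mulVec_const_eq_zero hP]
  abel

variable {ρ : ℝ} {x xh : Fin N → ℝ} {a : ℝ}

lemma enorm'_add_mulVec_sub_const_le (hP : 1 + K ∈ doublyStochastic ℝ (Fin N))
    (hρ : ∀ v : Fin N → ℝ, ∑ i, v i = 0 → enorm' ((1 + K) *ᵥ v) ≤ ρ * enorm' v)
    (hmean : ∑ i, (x i - a) = 0) :
    enorm' (x + K *ᵥ xh - fun _ => a) ≤ ρ * enorm' (x - fun _ => a) + 2 * enorm' (x - xh) := by
  have hsplit : x + K *ᵥ xh - (fun _ => a) = (1 + K) *ᵥ (x - fun _ => a) - K *ᵥ (x - xh) := by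
    rw [mulVec_eq_mulVec_sub_mulVec hP x xh a, add_mulVec, one_mulVec]
    abel
  rw [hsplit]
  exact (enorm'_sub_le _ _).trans (add_le_add (hρ _ hmean) (enorm'_mulVec_le_two hP _))

lemma enorm'_add_mulVec_sub_le (hP : 1 + K ∈ doublyStochastic ℝ (Fin N))
    (hρ : ∀ v : Fin N → ℝ, ∑ i, v i = 0 → enorm' ((1 + K) *ᵥ v) ≤ ρ * enorm' v)
    (hmean : ∑ i, (x i - a) = 0) :
    enorm' (x + K *ᵥ xh - xh) ≤ (1 + ρ) * enorm' (x - fun _ => a) + 3 * enorm' (x - xh) := by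
  have hsplit : x + K *ᵥ xh - xh =
      ((1 + K) *ᵥ (x - fun _ => a) - (x - fun _ => a)) + ((x - xh) - K *ᵥ (x - xh)) := by
    rw [mulVec_eq_mulVec_sub_mulVec hP x xh a, add_mulVec, one_mulVec]
    abel
  set y := x - fun _ => a
  set e := x - xh
  have hy : enorm' ((1 + K) *ᵥ y - y) ≤ (1 + ρ) * enorm' y := by
    linarith [enorm'_sub_le ((1 + K) *ᵥ y) y, hρ y hmean]
  have he : enorm' (e - K *ᵥ e) ≤ 3 * enorm' e := by
    linarith [enorm'_sub_le e (K *ᵥ e), enorm'_mulVec_le_two hP e]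
  rw [hsplit]
  linarith [enorm'_add_le ((1 + K) *ᵥ y - y) (e - K *ᵥ e)]

end Consensus

section Quantizer

variable {m : ℕ}

lemma abs_sub_quant_le (hm : 0 < m) {u : ℝ} (hu : |u| ≤ 1) : |u - quant m u| ≤ 1 / m := by
  obtain ⟨hu₁, hu₂⟩ := abs_le.1 hu
  have hm' : (0 : ℝ) < m := Nat.cast_pos.2 hm
  set z : ℝ := m * (u + 1) / 2 with hz
  have hz₀ : 0 ≤ z := by rw [hz]; nlinarith
  have hzm : ⌈z⌉ ≤ (m : ℤ) := Int.ceil_le.2 (by push_cast; rw [hz]; nlinarith)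
  rw [quant, if_neg (not_lt.2 hu₂), if_neg (not_lt.2 hu₁),
    min_eq_right (by exact_mod_cast hzm : ((⌈z⌉ : ℤ) : ℝ) ≤ m)]
  set c : ℝ := max 1 (⌈z⌉ : ℝ)
  have hzc : z ≤ c := (Int.le_ceil z).trans (le_max_right _ _)
  have hcz : c ≤ z + 1 := max_le (by linarith) (Int.ceil_lt_add_one z).le
  rw [show u - (-1 + (2 * c - 1) / m) = (2 * z - 2 * c + 1) / m by simp only [z]; field_simp; ring,
    abs_div, Nat.abs_cast, div_le_div_iff_of_pos_right hm']
  exact abs_le.2 ⟨by linarith, by linarith⟩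

lemma abs_sub_mul_quant_le (hm : 0 < m) {l d : ℝ} (hl : 0 < l) (hd : |d| ≤ l) :
    |d - l * quant m (d / l)| ≤ l / m := by
  have hq := abs_sub_quant_le hm (u := d / l) (by rwa [abs_div, abs_of_pos hl, div_le_one hl])
  calc |d - l * quant m (d / l)| = l * |d / l - quant m (d / l)| := by
        rw [← abs_of_pos hl, ← abs_mul, abs_of_pos hl, mul_sub, mul_div_cancel₀ d hl.ne']
    _ ≤ l * (1 / m) := by gcongr
    _ = l / m := mul_one_div l m

end Quantizer

lemma enorm'_sub_le_of_quant {N m : ℕ} (hm : 0 < m) {L : ℝ} (hL : 0 < L) {x xh xh' : Fin N → ℝ}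
    (hxh' : ∀ j, xh' j = xh j + L * quant m ((x j - xh j) / L))
    (hd : ∀ j, |x j - xh j| ≤ L) :
    enorm' (x - xh') ≤ Real.sqrt N / m * L := by
  have h : ∀ j, |(x - xh') j| ≤ L / m := fun j => by
    simpa only [Pi.sub_apply, hxh', sub_add_eq_sub_sub] using abs_sub_mul_quant_le hm hL (hd j)
  calc enorm' (x - xh') ≤ Real.sqrt N * (L / m) := enorm'_le_of_forall_abs_le (by positivity) h
    _ = Real.sqrt N / m * L := by ring

lemma exists_pos_le_mul_pow_of_succ {f : ℕ → ℝ} {r B : ℝ} (hr : 0 < r)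
    (h : ∀ t, f (t + 1) ≤ B * r ^ t) : ∃ C, 0 < C ∧ ∀ t, f t ≤ C * r ^ t := by
  refine ⟨max (max (f 0) (B / r)) 1, by positivity, fun t => ?_⟩
  cases t with
  | zero => simp
  | succ t =>
    calc f (t + 1) ≤ B / r * r ^ (t + 1) := by
          rw [pow_succ', ← mul_assoc, div_mul_cancel₀ B hr.ne']; exact h t
      _ ≤ _ := by gcongr; exact (le_max_right _ _).trans (le_max_left _ _)

lemma exists_gain {ρ kin u l₀ X : ℝ} (hρ0 : 0 ≤ ρ) (hρk : ρ < kin) (hu : 0 < u)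
    (hum : u * (4 + 3 * kin) ≤ kin * (kin - ρ)) (hl₀ : 0 < l₀)
    (hXl : (1 + ρ) * X < l₀ * (kin - 3 * u)) :
    ∃ α, X ≤ α * l₀ ∧ ρ * α + 2 * u ≤ kin * α ∧ (1 + ρ) * α + 3 * u < kin := by
  have hkρ : 0 < kin - ρ := sub_pos.2 hρk
  refine ⟨max (2 * u / (kin - ρ)) (X / l₀), ?_, ?_, ?_⟩
  · exact (div_le_iff₀ hl₀).1 (le_max_right _ _)
  · have := (div_le_iff₀' hkρ).1 (le_max_left (2 * u / (kin - ρ)) (X / l₀))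
    linarith
  · rw [mul_max_of_nonneg _ _ (by linarith), max_add, max_lt_iff, ← mul_div_assoc,
      ← mul_div_assoc, ← lt_sub_iff_add_lt, ← lt_sub_iff_add_lt, div_lt_iff₀ hkρ, div_lt_iff₀ hl₀]
    constructor <;> nlinarith

lemma zooming_parameters {N m : ℕ} (hN : 0 < N) {ρ kin l₀ X : ℝ} (hρ0 : 0 ≤ ρ) (hρk : ρ < kin)
    (hk1 : kin < 1) (hm : (m : ℝ) ≥ (4 + 3 * kin) * Real.sqrt N / (kin * (kin - ρ)))
    (hX : 0 ≤ X) (hl₀ : l₀ > 2 * (ρ + 2) * X / (kin - 3 * Real.sqrt N / m)) :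
    0 < m ∧ 0 < l₀ ∧ X ≤ l₀ ∧ ∃ α, X ≤ α * l₀ ∧ ρ * α + 2 * (Real.sqrt N / m) ≤ kin * α ∧
      (1 + ρ) * α + 3 * (Real.sqrt N / m) < kin := by
  have hkin : 0 < kin := hρ0.trans_lt hρk
  have hsqrtN : 0 < Real.sqrt N := Real.sqrt_pos.2 (Nat.cast_pos.2 hN)
  have hm0 : (0 : ℝ) < m := lt_of_lt_of_le (by have := sub_pos.2 hρk; positivity) hm
  set u := Real.sqrt N / m
  have hu : 0 < u := by positivity
  have hum : u * (4 + 3 * kin) ≤ kin * (kin - ρ) := by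
    rw [ge_iff_le, div_le_iff₀ (by nlinarith)] at hm
    rw [div_mul_eq_mul_div, div_le_iff₀ hm0]
    linarith
  have h3u : 0 < kin - 3 * u := by nlinarith
  rw [gt_iff_lt, mul_div_assoc (3 : ℝ), div_lt_iff₀ h3u] at hl₀
  have hl₀0 : 0 < l₀ := by nlinarith
  exact ⟨Nat.cast_pos.1 hm0, hl₀0, by nlinarith, exists_gain hρ0 hρk hu hum hl₀0 (by nlinarith)⟩

section Trajectory

variable {N : ℕ} {K : Matrix (Fin N) (Fin N) ℝ} {x xhat : ℕ → Fin N → ℝ}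

lemma sum_sub_mean_eq_zero (hN : N ≠ 0) (hP : 1 + K ∈ doublyStochastic ℝ (Fin N))
    (hx : ∀ t, x (t + 1) = x t + K *ᵥ xhat t) (t : ℕ) :
    ∑ i, (x t i - (N : ℝ)⁻¹ * ∑ i, x 0 i) = 0 := by
  have hsum : ∑ i, x t i = ∑ i, x 0 i := by
    induction t with
    | zero => rfl
    | succ t ih => simp [hx, sum_add_distrib, sum_mulVec_eq_zero hP, ih]
  rw [sum_sub_distrib, hsum, sum_const, card_univ, Fintype.card_fin, nsmul_eq_mul,
    mul_inv_cancel_left₀ (Nat.cast_ne_zero.2 hN), sub_self]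

theorem zooming_invariant {l : ℕ → Fin N → ℝ} {ρ kin kout l₀ α a : ℝ} {m : ℕ}
    (hP : 1 + K ∈ doublyStochastic ℝ (Fin N)) (hρ0 : 0 ≤ ρ)
    (hρ : ∀ v : Fin N → ℝ, ∑ i, v i = 0 → enorm' ((1 + K) *ᵥ v) ≤ ρ * enorm' v)
    (hm : 0 < m) (hkin : 0 < kin) (hl₀ : 0 < l₀)
    (hcontr : ρ * α + 2 * (Real.sqrt N / m) ≤ kin * α)
    (hzoom : (1 + ρ) * α + 3 * (Real.sqrt N / m) < kin)
    (hx : ∀ t, x (t + 1) = x t + K *ᵥ xhat t)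
    (hxhat : ∀ t j, xhat (t + 1) j =
      xhat t j + l (t + 1) j * quant m ((x (t + 1) j - xhat t j) / l (t + 1) j))
    (hl1 : ∀ j, l 1 j = l₀)
    (hlrec : ∀ t j, 1 ≤ t →
      l (t + 1) j = if |x (t + 1) j - xhat t j| < kin * l t j then kin * l t j else kout * l t j)
    (hmean : ∀ t, ∑ i, (x t i - a) = 0)
    (hd₀ : ∀ j, |x 1 j - xhat 0 j| ≤ l₀) (hy₀ : enorm' (x 1 - fun _ => a) ≤ α * l₀) (t : ℕ) :
    (∀ j, l (t + 1) j = l₀ * kin ^ t) ∧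
      enorm' (x (t + 1) - xhat (t + 1)) ≤ Real.sqrt N / m * (l₀ * kin ^ t) ∧
      enorm' (x (t + 1) - fun _ => a) ≤ α * (l₀ * kin ^ t) := by
  induction t with
  | zero =>
    simpa using ⟨hl1, enorm'_sub_le_of_quant hm hl₀ (xh' := xhat 1)
      (fun j => by rw [hxhat, hl1]) hd₀, hy₀⟩
  | succ t ih =>
    obtain ⟨hl, he, hy⟩ := ih
    set L := l₀ * kin ^ t
    have hL : 0 < L := by positivity
    have hd : enorm' (x (t + 2) - xhat (t + 1)) < kin * L := by
      calc enorm' (x (t + 2) - xhat (t + 1))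
          ≤ (1 + ρ) * enorm' (x (t + 1) - fun _ => a) + 3 * enorm' (x (t + 1) - xhat (t + 1)) := by
            rw [hx]; exact enorm'_add_mulVec_sub_le hP hρ (hmean (t + 1))
        _ ≤ (1 + ρ) * (α * L) + 3 * (Real.sqrt N / m * L) := by gcongr
        _ = ((1 + ρ) * α + 3 * (Real.sqrt N / m)) * L := by ring
        _ < kin * L := mul_lt_mul_of_pos_right hzoom hL
    have hdj : ∀ j, |x (t + 2) j - xhat (t + 1) j| < kin * L := fun j =>
      (abs_le_enorm' (x (t + 2) - xhat (t + 1)) j).trans_lt hd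
    have hl' : ∀ j, l (t + 2) j = kin * L := fun j => by
      rw [hlrec (t + 1) j (Nat.le_add_left 1 t), hl j, if_pos (hl j ▸ hdj j)]
    refine ⟨fun j => (hl' j).trans (by ring), ?_, ?_⟩
    · calc enorm' (x (t + 2) - xhat (t + 2)) ≤ Real.sqrt N / m * (kin * L) :=
          enorm'_sub_le_of_quant hm (by positivity) (xh' := xhat (t + 2))
            (fun j => by rw [hxhat, hl']) (fun j => (hdj j).le)
        _ = Real.sqrt N / m * (l₀ * kin ^ (t + 1)) := by ring
    · calc enorm' (x (t + 2) - fun _ => a)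
          ≤ ρ * enorm' (x (t + 1) - fun _ => a) + 2 * enorm' (x (t + 1) - xhat (t + 1)) := by
            rw [hx]; exact enorm'_add_mulVec_sub_const_le hP hρ (hmean (t + 1))
        _ ≤ ρ * (α * L) + 2 * (Real.sqrt N / m * L) := by gcongr
        _ = (ρ * α + 2 * (Real.sqrt N / m)) * L := by ring
        _ ≤ kin * α * L := mul_le_mul_of_nonneg_right hcontr hL.le
        _ = α * (l₀ * kin ^ (t + 1)) := by ring

end Trajectory

theorem zooming_convergence_general (N : ℕ)
    (K : Matrix (Fin N) (Fin N) ℝ)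
    -- P = I + K is doubly stochastic
    (hpos : ∀ i j, 0 ≤ (1 + K) i j)
    (hrow : ∀ i, ∑ j, (1 + K) i j = 1)
    (hcol : ∀ j, ∑ i, (1 + K) i j = 1)
    -- ρ is the essential spectral radius of P = I + K
    (ρ : ℝ) (hρ0 : 0 ≤ ρ)
    (hρ : ∀ v : Fin N → ℝ, (∑ i, v i) = 0 → enorm' ((1 + K).mulVec v) ≤ ρ * enorm' v)
    -- parameters
    (kin kout : ℝ) (m : ℕ) (l₀ : ℝ)
    (hρk : ρ < kin) (hk1 : kin < 1)
    (hm : (m : ℝ) ≥ (4 + 3 * kin) * Real.sqrt N / (kin * (kin - ρ)))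
    -- state, estimates and scaling factors
    (x xhat : ℕ → Fin N → ℝ) (l : ℕ → Fin N → ℝ)
    (hl₀ : l₀ > 2 * (ρ + 2) * enorm' (x 0) / (kin - 3 * Real.sqrt N / m))
    (hx : ∀ t, x (t + 1) = x t + K.mulVec (xhat t))
    (hxhat0 : xhat 0 = 0)
    (hxhat : ∀ t j, xhat (t + 1) j =
      xhat t j + l (t + 1) j * quant m ((x (t + 1) j - xhat t j) / l (t + 1) j))
    (hl1 : ∀ j, l 1 j = l₀)
    (hlrec : ∀ t j, 1 ≤ t →
      l (t + 1) j = if |x (t + 1) j - xhat t j| < kin * l t j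
        then kin * l t j else kout * l t j) :
    ∃ C : ℝ, 0 < C ∧ ∀ t,
      enorm' (x t - fun _ => (N : ℝ)⁻¹ * ∑ i, x 0 i) ≤ C * kin ^ t ∧
      enorm' (xhat t - fun _ => (N : ℝ)⁻¹ * ∑ i, x 0 i) ≤ C * kin ^ t := by
  have hkin : 0 < kin := hρ0.trans_lt hρk
  rcases N.eq_zero_or_pos with rfl | hN
  · exact ⟨1, one_pos, fun t => by simp [enorm', pow_nonneg hkin.le]⟩
  have hP : 1 + K ∈ doublyStochastic ℝ (Fin N) := mem_doublyStochastic_iff_sum.2 ⟨hpos, hrow, hcol⟩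
  obtain ⟨hm0, hl₀0, hXl, α, hα₀, hcontr, hzoom⟩ :=
    zooming_parameters hN hρ0 hρk hk1 hm (enorm'_nonneg (x 0)) hl₀
  have hx1 : x 1 = x 0 := by rw [hx, hxhat0, mulVec_zero, add_zero]
  have hinv := zooming_invariant hP hρ0 hρ hm0 hkin hl₀0 hcontr hzoom hx hxhat hl1 hlrec
    (sum_sub_mean_eq_zero hN.ne' hP hx)
    (fun j => by simpa [hx1, hxhat0] using (abs_le_enorm' (x 0) j).trans hXl)
    (by rw [hx1]; exact (enorm'_sub_mean_le (x 0)).trans hα₀)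
  set a := (N : ℝ)⁻¹ * ∑ i, x 0 i
  set u := Real.sqrt N / m
  obtain ⟨C, hC, hbound⟩ := exists_pos_le_mul_pow_of_succ (B := (α + u) * l₀)
    (f := fun t => max (enorm' (x t - fun _ => a)) (enorm' (xhat t - fun _ => a))) hkin
    (fun t => by
      obtain ⟨-, he, hy⟩ := hinv t
      have hsplit : xhat (t + 1) - (fun _ => a) =
          (x (t + 1) - fun _ => a) - (x (t + 1) - xhat (t + 1)) := by abel
      have he₀ := enorm'_nonneg (x (t + 1) - xhat (t + 1))
      exact max_le (by linarith) (hsplit ▸ (enorm'_sub_le _ _).trans (by linarith)))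
  exact ⟨C, hC, fun t => max_le_iff.1 (hbound t)⟩

/-- Main convergence theorem for the zooming-in/zooming-out average consensus
algorithm (Theorem 1 of the paper). -/
theorem zooming_convergence (N : ℕ) (hN : 1 ≤ N)
    (K : Matrix (Fin N) (Fin N) ℝ)
    -- P = I + K is doubly stochastic
    (hpos : ∀ i j, 0 ≤ (1 + K) i j)
    (hrow : ∀ i, ∑ j, (1 + K) i j = 1)
    (hcol : ∀ j, ∑ i, (1 + K) i j = 1)
    (hK1 : Matrix.vecMul (fun _ => (1:ℝ)) K = 0)
    (hker : ∀ v : Fin N → ℝ, K.mulVec v = 0 ↔ ∃ c : ℝ, v = fun _ => c)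
    -- ρ is the essential spectral radius of P = I + K
    (ρ : ℝ) (hρ0 : 0 ≤ ρ)
    (hρ : ∀ v : Fin N → ℝ, (∑ i, v i) = 0 → enorm' ((1 + K).mulVec v) ≤ ρ * enorm' v)
    -- parameters
    (kin kout : ℝ) (m : ℕ) (l₀ : ℝ)
    (hρk : ρ < kin) (hk1 : kin < 1) (hkout : 1 < kout)
    (hm : (m : ℝ) ≥ (4 + 3 * kin) * Real.sqrt N / (kin * (kin - ρ)))
    -- state, estimates and scaling factors
    (x xhat : ℕ → Fin N → ℝ) (l : ℕ → Fin N → ℝ)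
    (hl₀ : l₀ > 2 * (ρ + 2) * enorm' (x 0) / (kin - 3 * Real.sqrt N / m))
    (hx : ∀ t, x (t + 1) = x t + K.mulVec (xhat t))
    (hxhat0 : xhat 0 = 0)
    (hxhat : ∀ t j, xhat (t + 1) j =
      xhat t j + l (t + 1) j * quant m ((x (t + 1) j - xhat t j) / l (t + 1) j))
    (hl0 : ∀ j, l 0 j = l₀) (hl1 : ∀ j, l 1 j = l₀)
    (hlrec : ∀ t j, 1 ≤ t →
      l (t + 1) j = if |x (t + 1) j - xhat t j| < kin * l t j
        then kin * l t j else kout * l t j) :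
    ∃ C : ℝ, 0 < C ∧ ∀ t,
      enorm' (x t - fun _ => (N : ℝ)⁻¹ * ∑ i, x 0 i) ≤ C * kin ^ t ∧
      enorm' (xhat t - fun _ => (N : ℝ)⁻¹ * ∑ i, x 0 i) ≤ C * kin ^ t :=
  zooming_convergence_general N K hpos hrow hcol ρ hρ0 hρ kin kout m l₀ hρk hk1 hm x xhat l hl₀ hx
    hxhat0 hxhat hl1 hlrec
end
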